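/- arXiv:2007.11131 — 2 statements merged into one kernel-verified Lean document; each statement's English description precedes it below -/
import Mathlib

section
/- Let V be a finite set, E ⊆ V × V an acyclic relation, B ∈ ℝ^{V×V} supported on E, Ω symmetric, and Σ = (I−B)^{-1} Ω (I−B)^{-T}. Let v ∈ V and C ⊆ V∖{v} with pa(v) ⊆ C ⊆ an(v) and Ω_{vu} = 0 for all u ∈ C; let D ∈ ℝ^{V×V} with D_{An(C),An(C)} = B_{An(C),An(C)} and D_{An(C), V∖An(C)} = 0, and let S agree with Σ on (An(C)∪{v}) × (An(C)∪{v}). Let q ∈ C with B_{vq} = 0, and assume the matrices (I−D)_{C',An(C')} S_{An(C'),C'} are invertible for C' = C and C' = C∖{q}. Let ε be an integrable mean-zero random vector with ε_C independent of ε_v and Y = (I−B)^{-1}ε. Then δ_v(C∖{q}, An(C∖{q}), S, D) = B_{v,C∖{q}}, the residual Y_v − δ_v(C∖{q}, An(C∖{q}), S, D) Y_{C∖{q}} equals ε_v, and for any integer K ≥ 2 with the required moments finite, E[(Y_q − Σ_w D_{qw}Y_w)^{K−1} (Y_v − δ_v(C∖{q}, An(C∖{q}), S, D) Y_{C∖{q}})]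 = E[ε_q^{K−1} ε_v] = 0. -/
/-!
Because `E` is acyclic, `B` is nilpotent, so `Y = (I - B)⁻¹ ε` satisfies `Y_u - B_{u,·} Y = ε_u`.
As `An(C)` is closed under parents, the rows of `D` on `An(C)` are those of `B`, and
`(I - B)_{c,·}` vanishes off `A' = An(C ∖ {q})` for `c ∈ C ∖ {q}`. Hence
`(I - D)_{C∖q,A'} (S_{A',v} - S_{A',C∖q} B_{v,C∖q}) = ((I - B) Σ (I - B)ᵀ)_{C∖q,v} = Ω_{C∖q,v} = 0`,
and since `B_{vq} = 0` the row `B_{v,·}` lives on `C ∖ {q}`, so it solves the linear system defining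
`δ_v`. Both residuals are then noise terms, and `E[ε_q^{K-1} ε_v] = E[ε_q^{K-1}] E[ε_v] = 0` by
independence.
-/

open Matrix MeasureTheory ProbabilityTheory

def msub {V : Type*} (M : Matrix V V ℝ) (R C : Finset V) : Matrix ↥R ↥C ℝ :=
  M.submatrix (fun i => (i : V)) (fun j => (j : V))

/-- The debiased direct effect
`δ_v(C, A, S, D) = ([(I−D)_{C,A} S_{A,C}]⁻¹ (I−D)_{C,A} S_{A,v})ᵀ`, as a vector `↥C → ℝ`. -/
noncomputable def delta {V : Type*} [Fintype V] [DecidableEq V]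
    (v : V) (C A : Finset V) (S D : Matrix V V ℝ) : ↥C → ℝ :=
  ((msub (1 - D) C A * msub S A C)⁻¹ * msub (1 - D) C A) *ᵥ fun a : ↥A => S (a : V) v

open Finset

section Acyclic

variable {V R : Type*} [Fintype V] [Semiring R] {r : V → V → Prop}

open Classical in
theorem card_transGen_lt_of_rel (hacyc : ∀ v, ¬ Relation.TransGen r v v) {u w : V}
    (huw : r u w) : #{x | Relation.TransGen r x u} < #{x | Relation.TransGen r x w} := by
  refine card_lt_card ⟨fun x hx => ?_, fun hsub => ?_⟩
  · simp only [mem_filter, mem_univ, true_and] at hx ⊢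
    exact hx.tail huw
  · have hu : u ∈ ({x | Relation.TransGen r x w} : Finset V) := by
      simpa using Relation.TransGen.single huw
    exact hacyc u (by simpa using hsub hu)

theorem Matrix.pow_apply_eq_zero_of_rank [DecidableEq V] {B : Matrix V V R}
    (hsupp : ∀ u v, B v u ≠ 0 → r u v) {ρ : V → ℕ} (hρ : ∀ u w, r u w → ρ u < ρ w) (k : ℕ)
    {i j : V} (hk : ρ i < ρ j + k) : (B ^ k) i j = 0 := by
  induction k generalizing j with
  | zero => exact one_apply_ne (by rintro rfl; omega)
  | succ k ih =>
    rw [pow_succ, mul_apply]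
    refine sum_eq_zero fun w _ => ?_
    by_cases hBwj : B w j = 0
    · rw [hBwj, mul_zero]
    · rw [ih (j := w) (by have := hρ j w (hsupp j w hBwj); omega), zero_mul]

theorem Matrix.isNilpotent_of_acyclic [DecidableEq V] (hacyc : ∀ v, ¬ Relation.TransGen r v v)
    {B : Matrix V V R} (hsupp : ∀ u v, B v u ≠ 0 → r u v) : IsNilpotent B := by
  classical
  refine ⟨Fintype.card V + 1, ext fun i j => pow_apply_eq_zero_of_rank hsupp
    (fun u w => card_transGen_lt_of_rel hacyc) _ ?_⟩
  have := card_filter_le univ (Relation.TransGen r · i)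
  rw [card_univ] at this
  omega

end Acyclic

/-- `A = An(C)`: the vertices with a possibly empty `r`-path into `C`. -/
def IsAncestorClosure {V : Type*} (r : V → V → Prop) (C A : Finset V) : Prop :=
  ∀ w, w ∈ A ↔ ∃ c ∈ C, Relation.ReflTransGen r w c

namespace IsAncestorClosure

variable {V R : Type*} [Zero R] {r : V → V → Prop} {C A : Finset V}

theorem subset (hA : IsAncestorClosure r C A) : C ⊆ A :=
  fun c hc => (hA c).2 ⟨c, hc, .refl⟩

theorem mono {C' A' : Finset V} (hA : IsAncestorClosure r C A) (hA' : IsAncestorClosure r C' A')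
    (h : C' ⊆ C) : A' ⊆ A := fun w hw => by
  obtain ⟨c, hc, hwc⟩ := (hA' w).1 hw
  exact (hA w).2 ⟨c, h hc, hwc⟩

theorem mem_of_rel (hA : IsAncestorClosure r C A) {a w : V} (ha : a ∈ A) (hwa : r w a) :
    w ∈ A := by
  obtain ⟨c, hc, hac⟩ := (hA a).1 ha
  exact (hA w).2 ⟨c, hc, hac.head hwa⟩

theorem apply_eq_zero {B : Matrix V V R} (hA : IsAncestorClosure r C A)
    (hsupp : ∀ u v, B v u ≠ 0 → r u v) {a w : V} (ha : a ∈ A) (hw : w ∉ A) : B a w = 0 := by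
  by_contra hB
  exact hw (hA.mem_of_rel ha (hsupp w a hB))

theorem apply_eq_of_eq_on {B D : Matrix V V R} (hA : IsAncestorClosure r C A)
    (hsupp : ∀ u v, B v u ≠ 0 → r u v) (hD : ∀ a ∈ A, ∀ a' ∈ A, D a a' = B a a')
    (hD0 : ∀ a ∈ A, ∀ w, w ∉ A → D a w = 0) {a : V} (ha : a ∈ A) (w : V) : D a w = B a w := by
  by_cases hw : w ∈ A
  · exact hD a ha w hw
  · rw [hD0 a ha w hw, hA.apply_eq_zero hsupp ha hw]

end IsAncestorClosure

section Algebra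

variable {V R : Type*} [Fintype V] [DecidableEq V] [CommRing R]

theorem Matrix.mul_nonsing_inv_mul_transpose_cancel {M : Matrix V V R} (hM : IsUnit M)
    (X : Matrix V V R) : M * (M⁻¹ * X * M⁻¹ᵀ) * Mᵀ = X := by
  have hdet := (isUnit_iff_isUnit_det M).1 hM
  rw [transpose_nonsing_inv, ← Matrix.mul_assoc, mul_nonsing_inv_cancel_left _ _ hdet,
    nonsing_inv_mul_cancel_right _ _ (by rwa [det_transpose])]

theorem sub_sum_mul_eq_of_eq_inv_mulVec {B : Matrix V V R} (hB : IsUnit (1 - B)) {y e : V → R}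
    (hy : y = (1 - B)⁻¹ *ᵥ e) (u : V) : y u - ∑ w, B u w * y w = e u := by
  have hye : (1 - B) *ᵥ y = e := by
    rw [hy, mulVec_mulVec, mul_nonsing_inv _ ((isUnit_iff_isUnit_det _).1 hB), one_mulVec]
  rw [← hye, sub_mulVec, one_mulVec]
  rfl

theorem mul_one_sub_transpose_apply (M B : Matrix V V R) (a v : V) :
    (M * (1 - B)ᵀ : Matrix V V R) a v = M a v - ∑ u, M a u * B v u := by
  rw [transpose_sub, transpose_one, Matrix.mul_sub, Matrix.mul_one, Matrix.sub_apply, mul_apply]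
  rfl

end Algebra

section DirectEffect

variable {V : Type*} [Fintype V] [DecidableEq V]

theorem delta_eq_of_mulVec_eq {v : V} {C A : Finset V} {S D : Matrix V V ℝ} {b : ↥C → ℝ}
    (hM : IsUnit (msub (1 - D) C A * msub S A C))
    (hb : msub (1 - D) C A *ᵥ (fun a : ↥A => S a v) = (msub (1 - D) C A * msub S A C) *ᵥ b) :
    delta v C A S D = b := by
  rw [delta, ← mulVec_mulVec, hb, mulVec_mulVec,
    nonsing_inv_mul _ ((isUnit_iff_isUnit_det _).1 hM), one_mulVec]

theorem delta_eq_of_covariance {B Om Sig S D : Matrix V V ℝ} {v : V} {C A : Finset V}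
    (hSig : (1 - B) * Sig * (1 - B)ᵀ = Om) (hCA : C ⊆ A) (hBv : ∀ u ∉ C, B v u = 0)
    (hBC : ∀ c ∈ C, ∀ u ∉ A, B c u = 0) (hDC : ∀ c ∈ C, ∀ a ∈ A, D c a = B c a)
    (hS : ∀ i ∈ insert v A, ∀ j ∈ insert v A, S i j = Sig i j) (hOm : ∀ c ∈ C, Om c v = 0)
    (hM : IsUnit (msub (1 - D) C A * msub S A C)) :
    delta v C A S D = fun c : ↥C => B v c := by
  refine delta_eq_of_mulVec_eq hM ?_
  -- `S_{A,v} - S_{A,C} B_{v,C}` is the column `v` of `Σ (I - B)ᵀ`, which `(I - D)_{C,A}` maps to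
  -- `((I - B) Σ (I - B)ᵀ)_{C,v} = Ω_{C,v} = 0`.
  set W : Matrix V V ℝ := Sig * (1 - B)ᵀ with hW
  have hres : (fun a : ↥A => S a v) - msub S A C *ᵥ (fun c : ↥C => B v c) =
      fun a : ↥A => W a v := by
    funext a
    have haA : (a : V) ∈ insert v A := mem_insert_of_mem a.2
    rw [hW, mul_one_sub_transpose_apply, ← Fintype.sum_subset (s := C) fun u hu => ?_,
      ← sum_coe_sort C]
    · simp only [Pi.sub_apply, mulVec, dotProduct, msub, submatrix_apply,
        hS _ haA _ (mem_insert_self v A),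
        fun c : ↥C => hS _ haA _ (mem_insert_of_mem (hCA c.2))]
    · by_contra huC
      exact hu (by rw [hBv u huC, mul_zero])
  have hker : msub (1 - D) C A *ᵥ (fun a : ↥A => W a v) = 0 := by
    funext c
    calc ∑ a : ↥A, (1 - D) c a * W a v
        = ∑ u, (1 - B) c u * W u v := by
          rw [← Fintype.sum_subset (s := A) (f := fun u => (1 - B) c u * W u v) fun u hu => ?_,
            ← sum_coe_sort A]
          · refine sum_congr rfl fun a _ => ?_
            rw [Matrix.sub_apply, Matrix.sub_apply, hDC c c.2 a a.2]
          · by_contra huA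
            have hcu : (c : V) ≠ u := fun h => huA (h ▸ hCA c.2)
            exact hu (by
              rw [Matrix.sub_apply, one_apply_ne hcu, hBC c c.2 u huA, sub_zero, zero_mul])
      _ = Om c v := by rw [← mul_apply, hW, ← Matrix.mul_assoc, hSig]
      _ = 0 := hOm c c.2
  rw [← mulVec_mulVec, ← sub_eq_zero, ← mulVec_sub, hres, hker]

end DirectEffect

theorem stmt_12_general {V : Type*} [Fintype V] [DecidableEq V]
    (r : V → V → Prop) (hacyc : ∀ v : V, ¬ Relation.TransGen r v v)
    (B : Matrix V V ℝ) (hsupp : ∀ u v : V, B v u ≠ 0 → r u v)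
    (Om : Matrix V V ℝ) (hOm : Om.IsSymm)
    (Sig : Matrix V V ℝ) (hSig : Sig = (1 - B)⁻¹ * Om * ((1 - B)⁻¹)ᵀ)
    (v : V) (C : Finset V)
    (hpa : ∀ u : V, B v u ≠ 0 → u ∈ C)
    (hOmv : ∀ u ∈ C, Om v u = 0)
    -- `A = An(C)` and `A' = An(C ∖ {q})`
    (A A' : Finset V)
    (hA : ∀ w : V, w ∈ A ↔ ∃ c ∈ C, Relation.ReflTransGen r w c)
    (q : V) (hq : q ∈ C) (hBvq : B v q = 0)
    (hA' : ∀ w : V, w ∈ A' ↔ ∃ c ∈ C.erase q, Relation.ReflTransGen r w c)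
    (D : Matrix V V ℝ)
    (hD : ∀ a ∈ A, ∀ a' ∈ A, D a a' = B a a')
    (hD0 : ∀ a ∈ A, ∀ w : V, w ∉ A → D a w = 0)
    (S : Matrix V V ℝ)
    (hS : ∀ i ∈ insert v A, ∀ j ∈ insert v A, S i j = Sig i j)
    (hinv' : IsUnit (msub (1 - D) (C.erase q) A' * msub S A' (C.erase q)))
    {Ω : Type*} [MeasureSpace Ω]
    (ε : Ω → V → ℝ)
    (hint : ∀ w : V, Integrable fun ω => ε ω w)
    (hmean : ∀ w : V, ∫ ω, ε ω w = 0)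
    (hindep : IndepFun (fun ω => fun c : ↥C => ε ω (c : V)) (fun ω => ε ω v) volume)
    (Y : Ω → V → ℝ) (hY : ∀ ω, Y ω = (1 - B)⁻¹ *ᵥ ε ω) :
    (delta v (C.erase q) A' S D = fun c : ↥(C.erase q) => B v (c : V)) ∧
    (∀ ω, Y ω v - ∑ c : ↥(C.erase q), delta v (C.erase q) A' S D c * Y ω (c : V) = ε ω v) ∧
    ∀ K : ℕ, 2 ≤ K →
      Integrable (fun ω => |ε ω q| ^ (K - 1)) →
      (∫ ω, (Y ω q - ∑ w : V, D q w * Y ω w) ^ (K - 1) *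
            (Y ω v - ∑ c : ↥(C.erase q), delta v (C.erase q) A' S D c * Y ω (c : V)))
          = ∫ ω, (ε ω q) ^ (K - 1) * ε ω v ∧
      (∫ ω, (ε ω q) ^ (K - 1) * ε ω v) = 0 := by
  change IsAncestorClosure r C A at hA
  change IsAncestorClosure r (C.erase q) A' at hA'
  have hB : IsUnit (1 - B) := (isNilpotent_of_acyclic hacyc hsupp).isUnit_one_sub
  have hA'A : A' ⊆ A := hA.mono hA' (C.erase_subset q)
  have hBv : ∀ u ∉ C.erase q, B v u = 0 := fun u hu => by
    by_contra h
    exact hu (mem_erase.2 ⟨fun huq => h (huq ▸ hBvq), hpa u h⟩)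
  have hdelta : delta v (C.erase q) A' S D = fun c : ↥(C.erase q) => B v c :=
    delta_eq_of_covariance (by rw [hSig, mul_nonsing_inv_mul_transpose_cancel hB]) hA'.subset hBv
      (fun c hc u hu => hA'.apply_eq_zero hsupp (hA'.subset hc) hu)
      (fun c hc a ha => hD c (hA.subset (mem_of_mem_erase hc)) a (hA'A ha))
      (fun i hi j hj => hS i (insert_subset_insert v hA'A hi) j (insert_subset_insert v hA'A hj))
      (fun c hc => by rw [← hOm.apply, hOmv c (mem_of_mem_erase hc)]) hinv'
  have hres : ∀ ω, Y ω v - ∑ c : ↥(C.erase q), delta v (C.erase q) A' S D c * Y ω c = ε ω v := by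
    intro ω
    rw [hdelta, sum_coe_sort (C.erase q) (fun u => B v u * Y ω u),
      Fintype.sum_subset fun u hu => by_contra fun huC => hu (by rw [hBv u huC, zero_mul])]
    exact sub_sum_mul_eq_of_eq_inv_mulVec hB (hY ω) v
  have hresq : ∀ ω, Y ω q - ∑ w, D q w * Y ω w = ε ω q := by
    intro ω
    simp only [hA.apply_eq_of_eq_on hsupp hD hD0 (hA.subset hq)]
    exact sub_sum_mul_eq_of_eq_inv_mulVec hB (hY ω) q
  refine ⟨hdelta, hres, fun K _ _ => ⟨by simp only [hresq, hres], ?_⟩⟩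
  have hindep_q : IndepFun (fun ω => ε ω q ^ (K - 1)) (fun ω => ε ω v) :=
    hindep.comp ((measurable_pi_apply (⟨q, hq⟩ : ↥C)).pow_const _) measurable_id
  rw [hindep_q.integral_fun_mul_eq_mul_integral
    ((hint q).aemeasurable.pow_const _).aestronglyMeasurable (hint v).aestronglyMeasurable,
    hmean v, mul_zero]

/-- under the hypotheses of the debiased-direct-effect lemma, if `q ∈ C`
with `B_{vq} = 0`, then removing `q` from `C` still recovers the direct effects:
`δ_v(C∖{q}, An(C∖{q}), S, D) = B_{v,C∖{q}}`, the corresponding residual of `v` equals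
`ε_v`, and for any `K ≥ 2` with the required moments finite,
`E[γ_q(D)^{K−1} γ_v(C∖{q},S,D)] = E[ε_q^{K−1} ε_v] = 0`. -/
theorem stmt_12 {V : Type*} [Fintype V] [DecidableEq V]
    (r : V → V → Prop) (hacyc : ∀ v : V, ¬ Relation.TransGen r v v)
    (B : Matrix V V ℝ) (hsupp : ∀ u v : V, B v u ≠ 0 → r u v)
    (Om : Matrix V V ℝ) (hOm : Om.IsSymm)
    (Sig : Matrix V V ℝ) (hSig : Sig = (1 - B)⁻¹ * Om * ((1 - B)⁻¹)ᵀ)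
    (v : V) (C : Finset V) (hvC : v ∉ C)
    (hpa : ∀ u : V, B v u ≠ 0 → u ∈ C)
    (hCan : ∀ c ∈ C, Relation.TransGen r c v)
    (hOmv : ∀ u ∈ C, Om v u = 0)
    -- `A = An(C)` and `A' = An(C ∖ {q})`
    (A A' : Finset V)
    (hA : ∀ w : V, w ∈ A ↔ ∃ c ∈ C, Relation.ReflTransGen r w c)
    (q : V) (hq : q ∈ C) (hBvq : B v q = 0)
    (hA' : ∀ w : V, w ∈ A' ↔ ∃ c ∈ C.erase q, Relation.ReflTransGen r w c)
    (D : Matrix V V ℝ)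
    (hD : ∀ a ∈ A, ∀ a' ∈ A, D a a' = B a a')
    (hD0 : ∀ a ∈ A, ∀ w : V, w ∉ A → D a w = 0)
    (S : Matrix V V ℝ)
    (hS : ∀ i ∈ insert v A, ∀ j ∈ insert v A, S i j = Sig i j)
    (hinv : IsUnit (msub (1 - D) C A * msub S A C))
    (hinv' : IsUnit (msub (1 - D) (C.erase q) A' * msub S A' (C.erase q)))
    {Ω : Type*} [MeasureSpace Ω] [IsProbabilityMeasure (volume : Measure Ω)]
    (ε : Ω → V → ℝ)
    (hint : ∀ w : V, Integrable fun ω => ε ω w)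
    (hmean : ∀ w : V, ∫ ω, ε ω w = 0)
    (hindep : IndepFun (fun ω => fun c : ↥C => ε ω (c : V)) (fun ω => ε ω v) volume)
    (Y : Ω → V → ℝ) (hY : ∀ ω, Y ω = (1 - B)⁻¹ *ᵥ ε ω) :
    (delta v (C.erase q) A' S D = fun c : ↥(C.erase q) => B v (c : V)) ∧
    (∀ ω, Y ω v - ∑ c : ↥(C.erase q), delta v (C.erase q) A' S D c * Y ω (c : V) = ε ω v) ∧
    ∀ K : ℕ, 2 ≤ K →
      Integrable (fun ω => |ε ω q| ^ (K - 1)) →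
      (∫ ω, (Y ω q - ∑ w : V, D q w * Y ω w) ^ (K - 1) *
            (Y ω v - ∑ c : ↥(C.erase q), delta v (C.erase q) A' S D c * Y ω (c : V)))
          = ∫ ω, (ε ω q) ^ (K - 1) * ε ω v ∧
      (∫ ω, (ε ω q) ^ (K - 1) * ε ω v) = 0 :=
  stmt_12_general r hacyc B hsupp Om hOm Sig hSig v C hpa hOmv A A' hA q hq hBvq hA' D hD hD0 S hS
    hinv' ε hint hmean hindep Y hY
end

section
/- Let V be a finite set, E ⊆ V × V an acyclic relation, and B ∈ ℝ^{V×V} supported on E; write Π = (I − B)^{-1}. Let C ⊆ V and let v, q be distinct elements of V ∖ C. Then Π_{vq} − Σ_{c∈C} B̃(C ∪ {v})_{vc} Π_{cq} = B̃(C ∪ {q, v})_{vq}. -/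
/-!
Order `V` so that every edge of `r` points downwards; then `I - B`, `Π` and all principal
submatrices of `Π` and their inverses are unit upper triangular. Put `A = C ∪ {v}` and
`x = (Π_{AA})⁻¹ Π_{Aq}`. The vector equal to `-x` on `A` and to `1` at `q` is mapped by
`Π_{DD}`, `D = A ∪ {q}`, to `s e_q`, where `s = Π_{qq} - Π_{qA} x` is the Schur complement.
Triangularity forces `Π_{qA} x = 0` (there is no path leaving `q` and coming back), so `s = 1`
and `B̃(D)_{vq} = -((Π_{DD})⁻¹)_{vq} = x_v`. Splitting off the term `a = v` of
`x_v = ∑_{a ∈ A} ((Π_{AA})⁻¹)_{va} Π_{aq}`, where `((Π_{AA})⁻¹)_{vv} = 1`, gives the left side.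
-/

open Matrix

/-- The marginal direct effects matrix `B̃(A) = I − [((I−B)⁻¹)_{A,A}]⁻¹`. -/
noncomputable def Btilde {V : Type*} [Fintype V] [DecidableEq V]
    (B : Matrix V V ℝ) (A : Finset V) : Matrix ↥A ↥A ℝ :=
  1 - (msub (1 - B)⁻¹ A A)⁻¹

open Finset

theorem exists_linearOrder_of_acyclic {V : Type*} [Finite V] {r : V → V → Prop}
    (hacyc : ∀ v, ¬ Relation.TransGen r v v) : ∃ _ : LinearOrder V, ∀ u v, r u v → v < u := by
  classical
  have := Fintype.ofFinite V
  let desc : V → Finset V := fun x => {u | Relation.TransGen r x u}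
  have hdesc : ∀ u v, r u v → #(desc v) < #(desc u) := by
    refine fun u v huv => card_lt_card ⟨fun w hw => ?_, fun hsub => hacyc v ?_⟩
    · simp only [desc, mem_filter, mem_univ, true_and] at hw ⊢
      exact .head huv hw
    · simpa [desc] using hsub (by simpa [desc] using Relation.TransGen.single huv)
  let f : V → ℕ ×ₗ Fin (Fintype.card V) := fun x => toLex (#(desc x), Fintype.equivFin V x)
  have hf : Function.Injective f := fun x y h =>
    (Fintype.equivFin V).injective (congrArg (fun p => (ofLex p).2) h)
  exact ⟨LinearOrder.lift' f hf, fun u v huv => Prod.Lex.toLex_lt_toLex.2 (.inl (hdesc u v huv))⟩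

theorem Finset.sum_coe_sort_insert {α M : Type*} [DecidableEq α] [AddCommMonoid M]
    {s : Finset α} {a : α} (ha : a ∉ s) (f : ↥(insert a s) → M) :
    ∑ x, f x = f ⟨a, mem_insert_self a s⟩ + ∑ x : s, f ⟨x, mem_insert_of_mem x.2⟩ := by
  rw [← (subtypeInsertEquivOption ha).symm.sum_comp, Fintype.sum_option]
  rfl

namespace Matrix

variable {ι R : Type*} [Fintype ι] [CommRing R]

theorem IsUpperTriangular.mul_apply_self [LinearOrder ι] {M N : Matrix ι ι R}
    (hM : M.IsUpperTriangular) (hN : N.IsUpperTriangular) (i : ι) :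
    (M * N) i i = M i i * N i i := by
  rw [mul_apply]
  refine Fintype.sum_eq_single i fun k hk => ?_
  rcases lt_or_gt_of_ne hk with h | h
  · rw [hM h, zero_mul]
  · rw [hN h, mul_zero]

variable [DecidableEq ι]

theorem inv_apply_mul_eq_of_mulVec_eq_single {M : Matrix ι ι R} (hM : IsUnit M.det)
    {w : ι → R} {j : ι} {c : R} (h : M *ᵥ w = Pi.single j c) (i : ι) : M⁻¹ i j * c = w i := by
  let := M.invertibleOfIsUnitDet hM
  simpa using congrFun (inv_mulVec_eq_vec h.symm) i

theorem BlockTriangular.inv {α : Type*} [LinearOrder α] {M : Matrix ι ι R} {b : ι → α}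
    (hM : M.BlockTriangular b) : M⁻¹.BlockTriangular b := by
  by_cases hdet : IsUnit M.det
  · let := M.invertibleOfIsUnitDet hdet
    exact blockTriangular_inv_of_blockTriangular hM
  · rw [nonsing_inv_apply_not_isUnit M hdet]
    exact blockTriangular_zero

namespace IsUpperTriangular

variable [LinearOrder ι] {M : Matrix ι ι R} (hM : M.IsUpperTriangular) (hM1 : ∀ i, M i i = 1)
include hM hM1

theorem det_eq_one : M.det = 1 := by
  simp [det_of_isUpperTriangular hM, hM1]

theorem inv_apply_self (i : ι) : M⁻¹ i i = 1 := by
  have h := hM.mul_apply_self (BlockTriangular.inv hM) i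
  rwa [mul_nonsing_inv M (by simp [hM.det_eq_one hM1]), one_apply_eq, hM1, one_mul, eq_comm] at h

end IsUpperTriangular

end Matrix

theorem exists_linearOrder_isUpperTriangular_inv_one_sub {V : Type*} [Fintype V] [DecidableEq V]
    {r : V → V → Prop} (hacyc : ∀ v, ¬ Relation.TransGen r v v) {B : Matrix V V ℝ}
    (hsupp : ∀ u v, B v u ≠ 0 → r u v) :
    ∃ _ : LinearOrder V, (1 - B)⁻¹.IsUpperTriangular ∧ ∀ i, (1 - B)⁻¹ i i = 1 := by
  obtain ⟨_, hr⟩ := exists_linearOrder_of_acyclic hacyc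
  have hB : ∀ i j, j ≤ i → B i j = 0 := fun i j hji =>
    by_contra fun h => (hr _ _ (hsupp j i h)).not_ge hji
  have hI : (1 - B).IsUpperTriangular := fun i j hji => by
    simp [one_apply_ne (show j < i from hji).ne', hB i j hji.le]
  have hI1 : ∀ i, (1 - B) i i = 1 := fun i => by simp [hB i i le_rfl]
  exact ⟨inferInstance, BlockTriangular.inv hI, hI.inv_apply_self hI1⟩

section Msub

variable {V : Type*}

theorem isUpperTriangular_msub [LinearOrder V] {P : Matrix V V ℝ} (hP : P.IsUpperTriangular)
    (S : Finset V) : (msub P S S).IsUpperTriangular :=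
  fun _ _ h => hP h

variable [DecidableEq V]

theorem Btilde_apply_of_ne [Fintype V] (B : Matrix V V ℝ) (A : Finset V) {i j : A}
    (hij : i ≠ j) :
    Btilde B A i j = -(msub (1 - B)⁻¹ A A)⁻¹ i j := by
  simp [Btilde, one_apply_ne hij]

theorem inv_msub_insert_apply_mul_schur (M : Matrix V V ℝ) {A D : Finset V} {q v : V}
    (hD : insert q A = D) (hq : q ∉ A) (hv : v ∈ A) (hvD : v ∈ D) (hqD : q ∈ D)
    (hDdet : IsUnit (msub M D D).det) {x : A → ℝ} (hx : msub M A A *ᵥ x = fun a : A => M a q) :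
    (msub M D D)⁻¹ ⟨v, hvD⟩ ⟨q, hqD⟩ * (M q q - (fun a : A => M q a) ⬝ᵥ x) = -x ⟨v, hv⟩ := by
  subst hD
  refine (inv_apply_mul_eq_of_mulVec_eq_single hDdet
    (w := fun d => if h : (d : V) ∈ A then -x ⟨d, h⟩ else 1) ?_ _).trans (dif_pos hv)
  ext ⟨i, hi⟩
  rw [mulVec, dotProduct, sum_coe_sort_insert hq]
  simp only [msub, submatrix_apply, dif_neg hq, coe_mem, dif_pos, mul_one, mul_neg,
    sum_neg_distrib]
  rcases mem_insert.1 hi with rfl | hiA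
  · simp [dotProduct, sub_eq_add_neg]
  · have hne : (⟨i, hi⟩ : ↥(insert q A)) ≠ ⟨q, hqD⟩ := by
      rintro ⟨⟩
      exact hq hiA
    rw [Pi.single_eq_of_ne hne, ← congrFun hx ⟨i, hiA⟩]
    simp [mulVec, dotProduct, msub]

variable [LinearOrder V] {P : Matrix V V ℝ}

theorem Matrix.IsUpperTriangular.dotProduct_inv_msub_mulVec_eq_zero (hP : P.IsUpperTriangular)
    {A : Finset V} {q : V} (hq : q ∉ A) :
    (fun a : A => P q a) ⬝ᵥ ((msub P A A)⁻¹ *ᵥ fun a : A => P a q) = 0 := by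
  have hN := BlockTriangular.inv (isUpperTriangular_msub hP A)
  have hx : ∀ a : A, q < a → ((msub P A A)⁻¹ *ᵥ fun a' : A => P a' q) a = 0 := by
    intro a hqa
    refine sum_eq_zero fun a' _ => ?_
    dsimp only
    rcases lt_or_ge a' a with h | h
    · rw [hN h, zero_mul]
    · rw [hP (hqa.trans_le h), mul_zero]
  refine sum_eq_zero fun a _ => ?_
  dsimp only
  rcases lt_or_gt_of_ne (ne_of_mem_of_not_mem a.2 hq) with h | h
  · rw [hP h, zero_mul]
  · rw [hx a h, mul_zero]

end Msub

/-- For `B` supported on an acyclic relation, `Π = (I − B)⁻¹`, `C ⊆ V`,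
and distinct `v, q ∈ V ∖ C`:
`Π_{vq} − Σ_{c∈C} B̃(C ∪ {v})_{vc} Π_{cq} = B̃(C ∪ {q, v})_{vq}`. -/
theorem stmt_15 {V : Type*} [Fintype V] [DecidableEq V]
    (r : V → V → Prop) (hacyc : ∀ v : V, ¬ Relation.TransGen r v v)
    (B : Matrix V V ℝ) (hsupp : ∀ u v : V, B v u ≠ 0 → r u v)
    (C : Finset V) (v q : V) (hv : v ∉ C) (hq : q ∉ C) (hvq : v ≠ q) :
    (1 - B)⁻¹ v q -
        ∑ c : ↥C,
          Btilde B (insert v C) ⟨v, Finset.mem_insert_self v C⟩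
              ⟨(c : V), Finset.mem_insert_of_mem c.2⟩ *
            (1 - B)⁻¹ (c : V) q =
      Btilde B (insert v (insert q C))
        ⟨v, Finset.mem_insert_self v (insert q C)⟩
        ⟨q, Finset.mem_insert_of_mem (Finset.mem_insert_self q C)⟩ := by
  obtain ⟨_, hP, hP1⟩ := exists_linearOrder_isUpperTriangular_inv_one_sub hacyc hsupp
  set P := (1 - B)⁻¹
  have hdet : ∀ S, IsUnit (msub P S S).det := fun S => by
    simp [(isUpperTriangular_msub hP S).det_eq_one fun _ => hP1 _]
  have hvA : v ∈ insert v C := mem_insert_self v C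
  have hqA : q ∉ insert v C := by simp [hvq.symm, hq]
  set N := (msub P (insert v C) (insert v C))⁻¹
  have hN1 : N ⟨v, hvA⟩ ⟨v, hvA⟩ = 1 :=
    (isUpperTriangular_msub hP _).inv_apply_self (fun _ => hP1 _) _
  have hschur := inv_msub_insert_apply_mul_schur P (insert_comm q v C) hqA hvA
    (mem_insert_self v _) (mem_insert_of_mem (mem_insert_self q C)) (hdet _)
    (x := N *ᵥ fun a => P a q) (by rw [mulVec_mulVec, mul_nonsing_inv _ (hdet _), one_mulVec])
  rw [hP1, hP.dotProduct_inv_msub_mulVec_eq_zero hqA, sub_zero, mul_one] at hschur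
  rw [Btilde_apply_of_ne B _ (by simpa using hvq), hschur, neg_neg, mulVec, dotProduct,
    sum_coe_sort_insert hv, hN1, one_mul, sub_eq_add_neg, ← sum_neg_distrib]
  refine congrArg _ (sum_congr rfl fun c _ => ?_)
  rw [Btilde_apply_of_ne B _ (by simpa using (ne_of_mem_of_not_mem c.2 hv).symm), neg_mul,
    neg_neg]
end
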